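/- For every n ≥ 1, the canonical inclusion Δ[n] → IΔ^n is cellular with respect to the set {h^m_0 : Λ[m,0] → Δ[m] | m ≥ 2} of left horn inclusions; in particular it lies in the weakly saturated class generated by the left horn inclusions. -/

import Mathlib

open CategoryTheory CategoryTheory.GrothendieckTopology CategoryTheory.Limits Simplicial SSet Opposite

noncomputable section

namespace BousfieldPaper

/-! ## Basic lifting-property classes of simplicial sets -/

/-- A Kan fibration: a map with the right lifting property against all horn inclusions. -/
def KanFibration {S T : SSet.{0}} (p : S ⟶ T) : Prop :=
  ∀ (n : ℕ) (i : Fin (n + 2)), HasLiftingProperty ((horn (n + 1) i).ι) p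

/-- An acyclic (trivial) Kan fibration: a map with the right lifting property against
all boundary inclusions. -/
def TrivialKanFibration {S T : SSet.{0}} (p : S ⟶ T) : Prop :=
  ∀ n : ℕ, HasLiftingProperty ((boundary n).ι) p

/-- The class of maps with the right lifting property against every map in `T`. -/
def rlpOf {C : Type*} [Category C] (T : MorphismProperty C) : MorphismProperty C :=
  fun _ _ p => ∀ ⦃A B : C⦄ (i : A ⟶ B), T i → HasLiftingProperty i p

/-- The class of maps with the left lifting property against every map in `T`. -/
def llpOf {C : Type*} [Category C] (T : MorphismProperty C) : MorphismProperty C :=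
  fun _ _ i => ∀ ⦃S T' : C⦄ (p : S ⟶ T'), T p → HasLiftingProperty i p

/-- The saturation `llp(rlp(S))` of a class of maps. -/
def saturationOf {C : Type*} [Category C] (S : MorphismProperty C) : MorphismProperty C :=
  llpOf (rlpOf S)

/-- The class of all horn inclusions (up to isomorphism of arrows). -/
def HornClass : MorphismProperty SSet.{0} := fun _ _ f =>
  ∃ (n : ℕ) (i : Fin (n + 2)), Nonempty (Arrow.mk f ≅ Arrow.mk ((horn (n + 1) i).ι))

/-- The class of left horn inclusions `Λ[n,0] → Δ[n]`, `n ≥ 2` (up to isomorphism of arrows). -/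
def LeftHornClass : MorphismProperty SSet.{0} := fun _ _ f =>
  ∃ n : ℕ, 2 ≤ n ∧ Nonempty (Arrow.mk f ≅ Arrow.mk ((horn n 0).ι))

/-- Anodyne maps: the saturation of the class of horn inclusions. -/
def Anodyne : MorphismProperty SSet.{0} := saturationOf HornClass

/-- A weak homotopy equivalence of simplicial sets (in the Kan--Quillen sense):
a map admitting a factorization as an anodyne map followed by an acyclic Kan fibration. -/
def WeakHomotopyEquivalence {S T : SSet.{0}} (f : S ⟶ T) : Prop :=
  ∃ (Z : SSet.{0}) (i : S ⟶ Z) (p : Z ⟶ T),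
    Anodyne i ∧ TrivialKanFibration p ∧ i ≫ p = f

/-! ## Saturated classes -/

/-- `f` is a retract of `g` in the arrow category. -/
def IsRetractOf {C : Type*} [Category C] {X Y X' Y' : C} (f : X ⟶ Y) (g : X' ⟶ Y') : Prop :=
  ∃ (i : Arrow.mk f ⟶ Arrow.mk g) (r : Arrow.mk g ⟶ Arrow.mk f), i ≫ r = 𝟙 _

/-- The inclusion functor of the subposet `{x | x < j}` of `J`. -/
def iioFunctor {J : Type} [Preorder J] (j : J) : Set.Iio j ⥤ J :=
  Monotone.functor (f := fun x => (x : J)) (fun _ _ h => h)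

/-- The cocone on the restriction of `F : J ⥤ C` to `{x | x < j}` with apex `F.obj j`. -/
def coconeBelow {J : Type} [Preorder J] {C : Type*} [Category C]
    (F : J ⥤ C) (j : J) : Cocone (iioFunctor j ⋙ F) where
  pt := F.obj j
  ι :=
    { app := fun x => F.map (homOfLE (le_of_lt x.2))
      naturality := fun x y g => by
        dsimp [iioFunctor, Monotone.functor]
        rw [← F.map_comp, Category.comp_id]
        congr 1 }

/-- A class of morphisms of simplicial sets is *saturated* (weakly saturated) if it is closed
under pushouts (cobase change), retracts and transfinite compositions. -/
structure IsSaturated (A : MorphismProperty SSet.{0}) : Prop where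
  pushout : ∀ ⦃X Y X' Y' : SSet.{0}⦄ (f : X ⟶ Y) (u : X ⟶ X') (v : Y ⟶ Y') (f' : X' ⟶ Y'),
    IsPushout f u v f' → A f → A f'
  retract : ∀ ⦃X Y X' Y' : SSet.{0}⦄ (f : X ⟶ Y) (g : X' ⟶ Y'),
    IsRetractOf f g → A g → A f
  transfinite : ∀ (J : Type) (_ : LinearOrder J) (_ : SuccOrder J) (_ : OrderBot J)
    (_ : WellFoundedLT J) (F : J ⥤ SSet.{0}) (c : Cocone F) (_ : IsColimit c),
    (∀ j : J, ¬IsMax j → A (F.map (homOfLE (Order.le_succ j)))) →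
    (∀ j : J, Order.IsSuccLimit j → Nonempty (IsColimit (coconeBelow F j))) →
    A (c.ι.app ⊥)

/-- Right cancellation property for monomorphisms. -/
def RightCancel (A : MorphismProperty SSet.{0}) : Prop :=
  ∀ ⦃X Y Z : SSet.{0}⦄ (u : X ⟶ Y) (v : Y ⟶ Z),
    Mono u → Mono v → A (u ≫ v) → A u → A v

/-- Left cancellation property for monomorphisms. -/
def LeftCancel (A : MorphismProperty SSet.{0}) : Prop :=
  ∀ ⦃X Y Z : SSet.{0}⦄ (u : X ⟶ Y) (v : Y ⟶ Z),
    Mono u → Mono v → A (u ≫ v) → A v → A u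

/-- 3-for-2 for monomorphisms: both left and right cancellation. -/
def ThreeForTwo (A : MorphismProperty SSet.{0}) : Prop :=
  RightCancel A ∧ LeftCancel A

/-! ## The left cone, the spine, and related subcomplexes of the standard simplex -/

/-- The left cone `C n ⊆ Δ[n]`: the union of the images of the initial edges `0 → i`. -/
def coneSub (n : ℕ) : Subfunctor Δ[n] where
  obj m := {α | ∃ i : ℕ, 1 ≤ i ∧ i ≤ n ∧
    ∀ j, (stdSimplex.asOrderHom α j : ℕ) = 0 ∨ (stdSimplex.asOrderHom α j : ℕ) = i}
  map := by
    rintro m m' g α ⟨i, hi1, hin, h⟩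
    exact ⟨i, hi1, hin, fun j => h _⟩

/-- The spine `Sp n ⊆ Δ[n]`: the union of the images of the edges `i → i+1`. -/
def spineSub (n : ℕ) : Subfunctor Δ[n] where
  obj m := {α | ∃ i : ℕ, i + 1 ≤ n ∧
    ∀ j, (stdSimplex.asOrderHom α j : ℕ) = i ∨ (stdSimplex.asOrderHom α j : ℕ) = i + 1}
  map := by
    rintro m m' g α ⟨i, hi, h⟩
    exact ⟨i, hi, fun j => h _⟩

/-- The union `(SpC) n ⊆ Δ[n]` of the images of the `2`-simplices `{0, i, i+1}`, `0 < i < n`. -/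
def spcSub (n : ℕ) : Subfunctor Δ[n] where
  obj m := {α | ∃ i : ℕ, 0 < i ∧ i + 1 ≤ n ∧
    ∀ j, (stdSimplex.asOrderHom α j : ℕ) = 0 ∨ (stdSimplex.asOrderHom α j : ℕ) = i ∨ (stdSimplex.asOrderHom α j : ℕ) = i + 1}
  map := by
    rintro m m' g α ⟨i, h₀, h₁, h⟩
    exact ⟨i, h₀, h₁, fun j => h _⟩

/-- The canonical inclusion `k n : C n → Λ[n, 0]` of the left cone into the left horn. -/
def coneToHorn (n : ℕ) (hn : 2 ≤ n) : ((coneSub n).toFunctor : SSet.{0}) ⟶ (Λ[n, 0] : SSet.{0}) where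
  app m := ↾fun α => by
    refine ⟨α.1, ?_⟩
    obtain ⟨i, hi1, hin, h⟩ := α.2
    intro hu
    rw [Set.eq_univ_iff_forall] at hu
    obtain ⟨kv, hkv0, hkvi, hkvlt⟩ : ∃ kv : ℕ, kv ≠ 0 ∧ kv ≠ i ∧ kv < n + 1 := by
      rcases eq_or_ne i 1 with hc | hc
      · exact ⟨2, by omega, by omega, by omega⟩
      · exact ⟨1, by omega, by omega, by omega⟩
    rcases hu ⟨kv, hkvlt⟩ with hr | h0
    · obtain ⟨j, hj⟩ := hr
      have hval := congrArg Fin.val hj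
      rcases h j with h' | h' <;> simp_all
    · have := congrArg Fin.val (Set.mem_singleton_iff.1 h0)
      simp_all

/-- The nerve `IΔ^n` of the free groupoid (codiscrete groupoid) on `{0, …, n}`:
its `m`-simplices are all (not necessarily monotone) functions `Fin (m+1) → Fin (n+1)`. -/
def IDelta (n : ℕ) : SSet.{0} where
  obj m := Fin (m.unop.len + 1) → Fin (n + 1)
  map f := ↾fun α => α ∘ f.unop.toOrderHom

/-- The canonical inclusion `Δ[n] → IΔ^n`. -/
def iDeltaIncl (n : ℕ) : (Δ[n] : SSet.{0}) ⟶ IDelta n where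
  app m := ↾fun α => ⇑(stdSimplex.asOrderHom α)

/-- The vertex `k : Δ[0] → IΔ^n`. -/
def iDeltaVertex (n : ℕ) (k : Fin (n + 1)) : (Δ[0] : SSet.{0}) ⟶ IDelta n where
  app m := ↾fun _ => fun _ => k


/-! ## Bisimplicial sets, the box product and the slash construction -/

/-- Bisimplicial sets: presheaves of sets on `Δ × Δ`. -/
abbrev BSSet : Type 1 := (SimplexCategory × SimplexCategory)ᵒᵖ ⥤ Type

/-- The box product `A □ B` of two simplicial sets: `(A □ B)_{n,m} = A_n × B_m`. -/
def box (A B : SSet.{0}) : BSSet where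
  obj nm := A.obj (op nm.unop.1) × B.obj (op nm.unop.2)
  map f := ↾fun p => ⟨A.map f.unop.1.op p.1, B.map f.unop.2.op p.2⟩

/-- The box product, functorially in its second variable. -/
def boxFunctor (A : SSet.{0}) : SSet.{0} ⥤ BSSet where
  obj B := box A B
  map g :=
    { app := fun nm => ↾fun p => ⟨p.1, g.app _ p.2⟩
      naturality := fun nm nm' f => by
        ext ⟨a, b⟩
        simp [box] }

/-- The box product is natural in its first variable. -/
def boxHomLeft {A A' : SSet.{0}} (f : A ⟶ A') (B : SSet.{0}) :
    (boxFunctor A).obj B ⟶ (boxFunctor A').obj B where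
  app nm := ↾fun p => ⟨f.app _ p.1, p.2⟩
  naturality nm nm' g := by
    ext ⟨a, b⟩
    simp [box, boxFunctor]

lemma boxHomLeft_natural {A A' : SSet.{0}} (f : A ⟶ A') {B B' : SSet.{0}} (g : B ⟶ B') :
    (boxFunctor A).map g ≫ boxHomLeft f B' = boxHomLeft f B ≫ (boxFunctor A').map g := rfl

/-- The simplicial set `A \ X` with `m`-simplices the bisimplicial maps `A □ Δ[m] → X`. -/
def slash (A : SSet.{0}) (X : BSSet) : SSet.{0} :=
  SSet.stdSimplex.op ⋙ ((boxFunctor A).op ⋙ yoneda.obj X)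

/-- Functoriality (contravariance) of `A \ X` in `A`. -/
def slashMap {A A' : SSet.{0}} (f : A ⟶ A') (X : BSSet) : slash A' X ⟶ slash A X :=
  Functor.whiskerLeft SSet.stdSimplex.op
    (Functor.whiskerRight (NatTrans.op
      { app := fun B => boxHomLeft f B
        naturality := fun _ _ g => (boxHomLeft_natural f g).symm }) (yoneda.obj X))

lemma slashMap_id (A : SSet.{0}) (X : BSSet) : slashMap (𝟙 A) X = 𝟙 (slash A X) := rfl

lemma slashMap_comp {A A' A'' : SSet.{0}} (f : A ⟶ A') (g : A' ⟶ A'') (X : BSSet) :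
    slashMap (f ≫ g) X = slashMap g X ≫ slashMap f X := rfl


/-! ## Columns, Reedy fibrancy, Segal and Bousfield maps -/

/-- The `n`-th column `X_n := Δ[n] \ X` of a bisimplicial set. -/
def col (n : ℕ) (X : BSSet) : SSet.{0} := slash Δ[n] X

/-- The face map `d_i : X_{n+1} → X_n` between columns. -/
def colδ {n : ℕ} (i : Fin (n + 2)) (X : BSSet) : col (n + 1) X ⟶ col n X :=
  slashMap (SSet.stdSimplex.map (SimplexCategory.δ i)) X

/-- The degeneracy map `s_i : X_n → X_{n+1}` between columns. -/
def colσ {n : ℕ} (i : Fin (n + 1)) (X : BSSet) : col n X ⟶ col (n + 1) X :=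
  slashMap (SSet.stdSimplex.map (SimplexCategory.σ i)) X

/-- A bisimplicial set is `v`-fibrant (Reedy fibrant) if `f \ X` is a Kan fibration for
every monomorphism `f` of simplicial sets. -/
def VFibrant (X : BSSet) : Prop :=
  ∀ ⦃A B : SSet.{0}⦄ (f : A ⟶ B), Mono f → KanFibration (slashMap f X)

/-- The `n`-th Bousfield map `β_n = c_n \ X : X_n → C_n \ X`. -/
def bousfieldMap (n : ℕ) (X : BSSet) : col n X ⟶ slash (coneSub n).toFunctor X :=
  slashMap (coneSub n).ι X

/-- The `n`-th Segal map `ξ_n = sp_n \ X : X_n → Sp_n \ X`. -/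
def segalMap (n : ℕ) (X : BSSet) : col n X ⟶ slash (spineSub n).toFunctor X :=
  slashMap (spineSub n).ι X

/-- A Bousfield-Segal space: a `v`-fibrant bisimplicial set whose Bousfield maps `β_n`,
`n ≥ 2`, are weak homotopy equivalences. -/
def IsBSegal (X : BSSet) : Prop :=
  VFibrant X ∧ ∀ n : ℕ, 2 ≤ n → WeakHomotopyEquivalence (bousfieldMap n X)

/-- A Segal space: a `v`-fibrant bisimplicial set whose Segal maps `ξ_n`,
`n ≥ 2`, are weak homotopy equivalences. -/
def IsSegal (X : BSSet) : Prop :=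
  VFibrant X ∧ ∀ n : ℕ, 2 ≤ n → WeakHomotopyEquivalence (segalMap n X)

/-- The map `IΔ^1 \ X → X_0` induced by the vertex `{0} : Δ[0] → IΔ^1`. -/
def completenessMap (X : BSSet) : slash (IDelta 1) X ⟶ col 0 X :=
  slashMap (iDeltaVertex 1 0) X

/-- A complete Bousfield-Segal space. -/
def IsCompleteBSegal (X : BSSet) : Prop :=
  IsBSegal X ∧ WeakHomotopyEquivalence (completenessMap X)

/-- A bisimplicial set is homotopically constant if every map of the simplex category
induces a weak homotopy equivalence between the corresponding columns. -/
def HomotopicallyConstant (X : BSSet) : Prop :=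
  ∀ ⦃a b : SimplexCategory⦄ (f : a ⟶ b),
    WeakHomotopyEquivalence (slashMap (SSet.stdSimplex.map f) X)

/-! ## Vertices, edges and the fraction operation -/

/-- The vertices of a simplicial set. -/
def vert (S : SSet.{0}) : Type := S.obj (op (SimplexCategory.mk 0))

/-- Two vertices of a simplicial set lie in the same connected component, i.e. they have
equal classes in `π₀`. -/
def hSim (S : SSet.{0}) (a b : vert S) : Prop :=
  Relation.EqvGen (fun v w : vert S => ∃ e : S.obj (op (SimplexCategory.mk 1)),
    SimplicialObject.δ S 1 e = v ∧ SimplicialObject.δ S 0 e = w) a b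

/-- The edge `0 → i` of the left cone `C n`. -/
def coneEdge (n : ℕ) (i : Fin (n + 1)) (hi : i ≠ 0) :
    (Δ[1] : SSet.{0}) ⟶ (coneSub n).toFunctor where
  app m := ↾fun β => by
    refine ⟨(SSet.stdSimplex.map (SimplexCategory.mkOfLe 0 i (Fin.zero_le i))).app m β, ?_⟩
    have hne : (i : ℕ) ≠ 0 := fun h => hi (by apply Fin.ext; simpa using h)
    refine ⟨(i : ℕ), by omega, i.is_le, fun j => ?_⟩
    have key : ∀ k : Fin 2,
        (((SimplexCategory.mkOfLe (0 : Fin (n + 1)) i (Fin.zero_le i)).toOrderHom k : Fin (n+1)) : ℕ) = 0 ∨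
        (((SimplexCategory.mkOfLe (0 : Fin (n + 1)) i (Fin.zero_le i)).toOrderHom k : Fin (n+1)) : ℕ) = i := by
      intro k
      match k with
      | 0 => left; rfl
      | 1 => right; rfl
    exact key _
  naturality m m' g := by
    ext β
    apply Subtype.ext
    exact ConcreteCategory.congr_hom ((SSet.stdSimplex.map
      (SimplexCategory.mkOfLe 0 i (Fin.zero_le i))).naturality g) β

variable (X : BSSet)

/-- Vertex component of the restriction along the edge `0 → 2` of `C₂` (the "numerator"). -/
def eF (w : vert (slash (coneSub 2).toFunctor X)) : vert (col 1 X) :=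
  (slashMap (coneEdge 2 2 (by decide)) X).app _ w

/-- Vertex component of the restriction along the edge `0 → 1` of `C₂` (the "denominator"). -/
def eG (w : vert (slash (coneSub 2).toFunctor X)) : vert (col 1 X) :=
  (slashMap (coneEdge 2 1 (by decide)) X).app _ w

/-- Vertex component of the face map `d_i : X_1 → X_0`. -/
def dV (i : Fin 2) (f : vert (col 1 X)) : vert (col 0 X) := (colδ i X).app _ f

/-- Vertex component of the degeneracy `s_0 : X_0 → X_1`; `oneV X x` is `1_x`. -/
def oneV (x : vert (col 0 X)) : vert (col 1 X) := (colσ 0 X).app _ x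

/-- The fraction operation determined by a section `μ₂` of the Bousfield map `β₂`:
`f/g := d₀ (μ₂ (f, g))`. -/
def fracV (μ₂ : slash (coneSub 2).toFunctor X ⟶ col 2 X)
    (w : vert (slash (coneSub 2).toFunctor X)) : vert (col 1 X) :=
  (colδ 0 X).app _ (μ₂.app _ w)

lemma dV_oneV (x : vert (col 0 X)) (i : Fin 2) : dV X i (oneV X x) = x := by
  have h : colσ (0 : Fin 1) X ≫ colδ i X = 𝟙 (col 0 X) := by
    rw [colδ, colσ]
    erw [← slashMap_comp, ← Functor.map_comp]
    have : SimplexCategory.δ i ≫ SimplexCategory.σ (0 : Fin 1) = 𝟙 (SimplexCategory.mk 0) := by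
      fin_cases i
      · exact SimplexCategory.δ_comp_σ_self
      · exact SimplexCategory.δ_comp_σ_succ
    erw [this, CategoryTheory.Functor.map_id, slashMap_id]; rfl
  exact ConcreteCategory.congr_hom (congrArg (fun (t : col 0 X ⟶ col 0 X) => t.app (op (SimplexCategory.mk 0)))
    h) x

/-- The identity morphism `1_x` as an element of the hom-space `X₁(x,x)`. -/
def idHom (x : vert (col 0 X)) :
    {f : vert (col 1 X) // dV X 1 f = x ∧ dV X 0 f = x} :=
  ⟨oneV X x, dV_oneV X x 1, dV_oneV X x 0⟩


/-! ## Cellularity, pushouts of coproducts, finite compositions of pushouts -/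

/-- `f` is a pushout (cobase change) of `g`. -/
def IsPushoutOf {C : Type*} [Category C] {A B X Y : C} (g : A ⟶ B) (f : X ⟶ Y) : Prop :=
  ∃ (u : A ⟶ X) (v : B ⟶ Y), IsPushout g u v f

/-- `f` is a pushout of a coproduct of maps belonging to the class `S`. -/
def IsPushoutOfCoproductOf (S : MorphismProperty SSet.{0}) {P Q : SSet.{0}} (f : P ⟶ Q) : Prop :=
  ∃ (ι : Type) (A B : ι → SSet.{0}) (g : ∀ i, A i ⟶ B i),
    (∀ i, S (g i)) ∧
      IsPushoutOf (Limits.Sigma.desc (fun i => g i ≫ Limits.Sigma.ι B i) : (∐ A) ⟶ (∐ B)) f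

/-- `f` is cellular with respect to the class `S`: it is a (transfinite, here `ℕ`-indexed)
composition of pushouts of coproducts of maps of `S`. -/
def IsCellularIn (S : MorphismProperty SSet.{0}) {X Y : SSet.{0}} (f : X ⟶ Y) : Prop :=
  ∃ (F : ℕ ⥤ SSet.{0}) (c : Cocone F) (_ : IsColimit c) (e₀ : F.obj 0 ≅ X) (e : c.pt ≅ Y),
    (∀ m : ℕ, IsPushoutOfCoproductOf S (F.map (homOfLE (Nat.le_succ m)))) ∧
      f = e₀.inv ≫ c.ι.app 0 ≫ e.hom

/-- `f` is a finite composition of pushouts of `g`. -/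
inductive FinCompPushoutsOf {A B : SSet.{0}} (g : A ⟶ B) : ∀ {X Y : SSet.{0}}, (X ⟶ Y) → Prop where
  | of {X Y : SSet.{0}} (f : X ⟶ Y) : IsPushoutOf g f → FinCompPushoutsOf g f
| comp {X Y Z : SSet.{0}} (f₁ : X ⟶ Y) (f₂ : Y ⟶ Z) :
      IsPushoutOf g f₁ → FinCompPushoutsOf g f₂ → FinCompPushoutsOf g (f₁ ≫ f₂)

/-! ## Lattice operations on subpresheaves -/

variable {C : Type*} [Category C]

/-- Intersection of two subpresheaves. -/
def subInf {F : Cᵒᵖ ⥤ Type} (G G' : Subfunctor F) : Subfunctor F where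
  obj U := G.obj U ∩ G'.obj U
  map i := fun _ hx => ⟨G.map i hx.1, G'.map i hx.2⟩

/-- Union of two subpresheaves. -/
def subSup {F : Cᵒᵖ ⥤ Type} (G G' : Subfunctor F) : Subfunctor F where
  obj U := G.obj U ∪ G'.obj U
  map i := by
    rintro x (hx | hx)
    · exact Or.inl (G.map i hx)
    · exact Or.inr (G'.map i hx)

lemma subInf_le_left {F : Cᵒᵖ ⥤ Type} (G G' : Subfunctor F) : subInf G G' ≤ G :=
  fun _ => Set.inter_subset_left

lemma le_subSup_left {F : Cᵒᵖ ⥤ Type} (G G' : Subfunctor F) : G ≤ subSup G G' :=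
  fun _ => Set.subset_union_left

/-! ## The coface `d¹` and the left cone -/

/-- The coface map `d¹ : Δ[n] → Δ[n+1]`. -/
def d1Map (n : ℕ) : (Δ[n] : SSet.{0}) ⟶ Δ[n + 1] :=
  SSet.stdSimplex.map (SimplexCategory.δ 1)

/-- The restriction of `d¹` to a map `C n → C (n+1) ∩ d¹[Δ[n]]`. -/
def coneToInter (n : ℕ) : ((coneSub n).toFunctor : SSet.{0}) ⟶
    (subInf (coneSub (n + 1)) (Subfunctor.range (d1Map n))).toFunctor where
  app m := ↾fun α => by
    refine ⟨(d1Map n).app m α.1, ?_, ⟨α.1, rfl⟩⟩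
    obtain ⟨i, hi1, hin, h⟩ := α.2
    refine ⟨i + 1, by omega, by omega, fun j => ?_⟩
    have key : stdSimplex.asOrderHom ((d1Map n).app m α.1) j
        = (1 : Fin (n + 2)).succAbove (stdSimplex.asOrderHom α.1 j) := rfl
    rcases h j with h' | h'
    · left
      have h0 : stdSimplex.asOrderHom α.1 j = 0 := by
        apply Fin.ext; exact h'
      rw [key, h0, Fin.succAbove_of_castSucc_lt]
      · simp
      · simp
    · right
      rw [key, Fin.succAbove_of_le_castSucc]
      · simp [Fin.val_succ, h']
      · rw [Fin.le_def]
        simpa using by omega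
  naturality m m' g := by
    ext α
    apply Subtype.ext
    exact ConcreteCategory.congr_hom ((d1Map n).naturality g) α.1

/-! ## Horizontally constant bisimplicial sets and closure properties -/

/-- `p₁* A`: the horizontally constant bisimplicial set with `(p₁* A)_{n,m} = A_n`. -/
def pHorizontal (A : SSet.{0}) : BSSet where
  obj nm := A.obj (op nm.unop.1)
  map f := A.map f.unop.1.op

/-- A class of maps of bisimplicial sets is stable under pullbacks. -/
def StableUnderPullbacksB (F : MorphismProperty BSSet) : Prop :=
  ∀ ⦃W X Y Z : BSSet⦄ (p' : W ⟶ X) (f' : W ⟶ Z) (f : X ⟶ Y) (p : Z ⟶ Y),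
    IsPullback p' f' f p → F f → F f'

/-- A class of maps of bisimplicial sets is stable under retracts. -/
def StableUnderRetractsB (F : MorphismProperty BSSet) : Prop :=
  ∀ ⦃X Y X' Y' : BSSet⦄ (f : X ⟶ Y) (g : X' ⟶ Y'), IsRetractOf f g → F g → F f

/-- A class of maps of bisimplicial sets is closed under sequential (inverse) limits:
limits of towers of arrows belonging to the class again belong to the class. -/
def ClosedUnderSequentialLimitsB (F : MorphismProperty BSSet) : Prop :=
  ∀ (G : ℕᵒᵖ ⥤ Arrow BSSet), (∀ n : ℕᵒᵖ, F (G.obj n).hom) →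
    ∀ (c : Cone G), IsLimit c → F c.pt.hom


/-!
A `k`-simplex of `IΔ^n` is a word `x : Fin (k + 1) → Fin (n + 1)`; its weight is the number of
changes of letter in the word `0x`. Simplicial operators do not increase the weight, so the
monotone words (the simplices of `Δ[n]`) together with the words of weight `≤ m + 1` form an
exhaustive filtration of `IΔ^n`, whose bottom stage is `Δ[n]` because a word of weight `≤ 1` is
monotone.

Every word factors uniquely as a reduced word (no two equal adjacent letters) after a monotone
surjection. Applied to `0x`, this shows that the non-monotone words of weight `m + 2` are
exactly the `w ∘ α` with `w` a non-monotone reduced word of length `m + 3` starting at `0` and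
`α` a simplex of `Δ[m + 2]` outside `Λ[m + 2, 0]`, each in exactly one way, whereas `w ∘ α`
has weight `< m + 2` when `α` lies in the horn. So the `m`-th step of the filtration is a pushout of
a coproduct of left horn inclusions. Cellular maps lie in the saturation because left lifting
properties are stable under coproducts, cobase change and transfinite composition.
-/

lemma monotone_of_monotone_comp {γ β δ : Type*} [LinearOrder γ] [LinearOrder β] [Preorder δ]
    {f : β → δ} {G : γ → β} (hG : Monotone G) (hGs : Function.Surjective G)
    (h : Monotone (f ∘ G)) : Monotone f := by
  intro i j hij
  obtain ⟨a, rfl⟩ := hGs i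
  obtain ⟨b, rfl⟩ := hGs j
  rcases le_total a b with hab | hba
  · exact h hab
  · rw [le_antisymm hij (hG hba)]

namespace Word

open Finset

variable {α β : Type*} {k m : ℕ}

open Classical in
def numChanges (y : Fin (k + 1) → α) : ℕ :=
  (univ.filter fun j : Fin k => y j.castSucc ≠ y j.succ).card

def IsReduced (w : Fin (m + 1) → α) : Prop := ∀ j : Fin m, w j.castSucc ≠ w j.succ

lemma numChanges_cons_of_eq {a : α} {y : Fin (k + 1) → α} (h : a = y 0) :
    numChanges (Fin.cons a y : Fin (k + 2) → α) = numChanges y := by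
  classical
  simp [numChanges, card_filter, Fin.sum_univ_succ, Fin.cons_succ, h]

lemma numChanges_cons_of_ne {a : α} {y : Fin (k + 1) → α} (h : a ≠ y 0) :
    numChanges (Fin.cons a y : Fin (k + 2) → α) = numChanges y + 1 := by
  classical
  simp [numChanges, card_filter, Fin.sum_univ_succ, Fin.cons_succ, h, add_comm]

lemma numChanges_comp_le (y : β → α) (G : Fin (k + 1) → β) :
    numChanges (y ∘ G) ≤ numChanges G :=
  card_le_card fun j => by simpa using mt (congrArg y)

lemma isReduced_cons {a : α} {w : Fin (m + 1) → α} :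
    IsReduced (Fin.cons a w : Fin (m + 2) → α) ↔ a ≠ w 0 ∧ IsReduced w := by
  simp [IsReduced, Fin.forall_fin_succ]

lemma monotone_cons [Preorder β] {a : β} {G : Fin (k + 1) → β} :
    Monotone (Fin.cons a G : Fin (k + 2) → β) ↔ a ≤ G 0 ∧ Monotone G :=
  monotone_vecCons

lemma numChanges_add_one_of_monotone [LinearOrder β] {G : Fin (k + 1) → β} (hG : Monotone G) :
    numChanges G + 1 = (Set.range G).ncard := by
  induction k with
  | zero => simp [numChanges, Set.range_unique]
  | succ k ih =>
    rw [← Fin.cons_self_tail G] at hG ⊢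
    obtain ⟨h0, htail⟩ := monotone_cons.mp hG
    rw [Fin.range_cons]
    by_cases h : G 0 = Fin.tail G 0
    · rw [numChanges_cons_of_eq h, Set.insert_eq_of_mem (Set.mem_range.mpr ⟨0, h.symm⟩),
        ih htail]
    · rw [numChanges_cons_of_ne h, Set.ncard_insert_of_notMem, ← ih htail]
      rintro ⟨j, hj⟩
      exact h (le_antisymm h0 (hj ▸ htail (Fin.zero_le j)))

section Surjective

variable {G : Fin (k + 1) → Fin (m + 1)}

lemma map_zero_of_monotone_of_surjective (hG : Monotone G) (hGs : Function.Surjective G) :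
    G 0 = 0 :=
  let ⟨a, ha⟩ := hGs 0
  le_antisymm (ha ▸ hG (Fin.zero_le a)) (Fin.zero_le _)

lemma val_succ_le_of_monotone_of_surjective (hG : Monotone G) (hGs : Function.Surjective G)
    (j : Fin k) : (G j.succ : ℕ) ≤ G j.castSucc + 1 := by
  by_contra! hlt
  obtain ⟨a, ha⟩ := hGs ⟨G j.castSucc + 1, by omega⟩
  have hva : (G a : ℕ) = G j.castSucc + 1 := congrArg Fin.val ha
  rcases le_or_gt a j.castSucc with h | h
  · have := Fin.le_def.mp (hG h)
    omega
  · have := Fin.le_def.mp (hG (Fin.castSucc_lt_iff_succ_le.mp h))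
    omega

lemma val_succ_eq_of_monotone_of_surjective (hG : Monotone G) (hGs : Function.Surjective G)
    {j : Fin k} (h : G j.castSucc ≠ G j.succ) : (G j.succ : ℕ) = G j.castSucc + 1 := by
  have := Fin.le_def.mp (hG (Fin.castSucc_le_succ j))
  have := val_succ_le_of_monotone_of_surjective hG hGs j
  have := Fin.val_ne_of_ne h
  omega

variable {w : Fin (m + 1) → α}

lemma IsReduced.comp_eq_iff (hw : IsReduced w) (hG : Monotone G) (hGs : Function.Surjective G)
    (j : Fin k) : w (G j.castSucc) = w (G j.succ) ↔ G j.castSucc = G j.succ := by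
  refine ⟨fun e => by_contra fun h => ?_, congrArg w⟩
  have hsucc := val_succ_eq_of_monotone_of_surjective hG hGs h
  exact hw ⟨G j.castSucc, by omega⟩ (e.trans (congrArg w (Fin.ext hsucc)))

lemma IsReduced.numChanges_comp (hw : IsReduced w) (hG : Monotone G)
    (hGs : Function.Surjective G) : numChanges (w ∘ G) = m := by
  have hG' : numChanges G + 1 = m + 1 := by
    rw [numChanges_add_one_of_monotone hG, hGs.range_eq, Set.ncard_univ,
      Nat.card_eq_fintype_card, Fintype.card_fin]
  have : numChanges (w ∘ G) = numChanges G := by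
    unfold numChanges
    congr 1
    ext j
    simp [hw.comp_eq_iff hG hGs]
  omega

lemma IsReduced.comp_injective {w' : Fin (m + 1) → α} {G' : Fin (k + 1) → Fin (m + 1)}
    (hw : IsReduced w) (hG : Monotone G) (hGs : Function.Surjective G)
    (hw' : IsReduced w') (hG' : Monotone G') (hGs' : Function.Surjective G')
    (h : w ∘ G = w' ∘ G') : w = w' ∧ G = G' := by
  have hGG : G = G' := by
    funext a
    induction a using Fin.induction with
    | zero =>
      rw [map_zero_of_monotone_of_surjective hG hGs, map_zero_of_monotone_of_surjective hG' hGs']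
    | succ j ih =>
      have hj : w (G j.castSucc) = w' (G' j.castSucc) := congrFun h _
      have hj' : w (G j.succ) = w' (G' j.succ) := congrFun h _
      by_cases hc : G j.castSucc = G j.succ
      · have hc' : G' j.castSucc = G' j.succ := (hw'.comp_eq_iff hG' hGs' j).mp <| by
          rw [← hj, ← hj', hc]
        rw [← hc, ← hc', ih]
      · have hc' : G' j.castSucc ≠ G' j.succ := fun hc' =>
          hc ((hw.comp_eq_iff hG hGs j).mp (by rw [hj, hj', hc']))
        exact Fin.ext (by rw [val_succ_eq_of_monotone_of_surjective hG hGs hc,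
          val_succ_eq_of_monotone_of_surjective hG' hGs' hc', ih])
  subst hGG
  refine ⟨funext fun i => ?_, rfl⟩
  obtain ⟨a, rfl⟩ := hGs i
  exact congrFun h a

end Surjective

lemma exists_isReduced_comp (y : Fin (k + 1) → α) :
    ∃ (m : ℕ) (w : Fin (m + 1) → α) (G : Fin (k + 1) → Fin (m + 1)),
      IsReduced w ∧ Monotone G ∧ Function.Surjective G ∧ w ∘ G = y := by
  induction k with
  | zero => exact ⟨0, y, id, fun j => j.elim0, monotone_id, Function.surjective_id, rfl⟩
  | succ k ih =>
    obtain ⟨m, w, G, hw, hG, hGs, hy⟩ := ih (Fin.tail y)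
    rw [← Fin.cons_self_tail y, ← hy]
    by_cases h : y 0 = w 0
    · refine ⟨m, w, Fin.cons 0 G, hw, monotone_cons.mpr ⟨Fin.zero_le _, hG⟩, fun i => ?_, ?_⟩
      · obtain ⟨a, rfl⟩ := hGs i
        exact ⟨a.succ, Fin.cons_succ _ _ _⟩
      · rw [Fin.comp_cons, h]
    · refine ⟨m + 1, Fin.cons (y 0) w, Fin.cons 0 (Fin.succ ∘ G), isReduced_cons.mpr ⟨h, hw⟩,
        monotone_cons.mpr ⟨Fin.zero_le _, (Fin.strictMono_succ.monotone.comp hG)⟩,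
        fun i => ?_, ?_⟩
      · induction i using Fin.cases with
        | zero => exact ⟨0, rfl⟩
        | succ i =>
          obtain ⟨a, rfl⟩ := hGs i
          exact ⟨a.succ, Fin.cons_succ _ _ _⟩
      · rw [Fin.comp_cons, Fin.cons_zero, ← Function.comp_assoc]
        rfl

lemma numChanges_comp_le_of_monotone {l : ℕ} (y : Fin (k + 1) → α)
    {ψ : Fin (l + 1) → Fin (k + 1)} (hψ : Monotone ψ) : numChanges (y ∘ ψ) ≤ numChanges y := by
  obtain ⟨m, w, G, hw, hG, hGs, rfl⟩ := exists_isReduced_comp y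
  have hcard : numChanges (G ∘ ψ) + 1 ≤ m + 1 := by
    rw [numChanges_add_one_of_monotone (hG.comp hψ)]
    simpa using Set.ncard_le_card (Set.range (G ∘ ψ))
  calc numChanges ((w ∘ G) ∘ ψ) = numChanges (w ∘ (G ∘ ψ)) := rfl
    _ ≤ numChanges (G ∘ ψ) := numChanges_comp_le w (G ∘ ψ)
    _ ≤ m := by omega
    _ = numChanges (w ∘ G) := (hw.numChanges_comp hG hGs).symm

end Word

open Word

section Weight

variable {n d k : ℕ}

def weight (x : Fin (k + 1) → Fin (n + 1)) : ℕ :=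
  numChanges (Fin.cons 0 x : Fin (k + 2) → Fin (n + 1))

lemma monotone_cons_zero {α : Fin (k + 1) → Fin (d + 1)} (hα : Monotone α) :
    Monotone (Fin.cons 0 α : Fin (k + 2) → Fin (d + 1)) :=
  monotone_cons.mpr ⟨Fin.zero_le _, hα⟩

lemma weight_comp_le {l : ℕ} (x : Fin (k + 1) → Fin (n + 1)) {φ : Fin (l + 1) → Fin (k + 1)}
    (hφ : Monotone φ) : weight (x ∘ φ) ≤ weight x := by
  have : (Fin.cons 0 (x ∘ φ) : Fin (l + 2) → Fin (n + 1)) =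
      (Fin.cons 0 x : Fin (k + 2) → Fin (n + 1)) ∘ Fin.cons 0 (Fin.succ ∘ φ) := by
    rw [Fin.comp_cons, Fin.cons_zero, ← Function.comp_assoc]
    rfl
  rw [weight, this]
  exact numChanges_comp_le_of_monotone _ (monotone_cons_zero (Fin.strictMono_succ.monotone.comp hφ))

variable {w : Fin (d + 1) → Fin (n + 1)} {α : Fin (k + 1) → Fin (d + 1)}

lemma weight_comp (hw0 : w 0 = 0) : weight (w ∘ α) = numChanges (w ∘ Fin.cons 0 α) := by
  rw [weight, Fin.comp_cons, hw0]

lemma weight_comp_lt (hw0 : w 0 = 0) (hα : Monotone α)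
    (hs : ¬ Function.Surjective (Fin.cons 0 α : Fin (k + 2) → Fin (d + 1))) :
    weight (w ∘ α) < d := by
  have hrange := Set.ncard_lt_card (mt Set.range_eq_univ.mp hs)
  rw [Nat.card_eq_fintype_card, Fintype.card_fin,
    ← numChanges_add_one_of_monotone (monotone_cons_zero hα)] at hrange
  have := numChanges_comp_le w (Fin.cons 0 α : Fin (k + 2) → Fin (d + 1))
  rw [weight_comp hw0]
  omega

lemma weight_comp_of_surjective (hw0 : w 0 = 0) (hw : IsReduced w) (hα : Monotone α)
    (hs : Function.Surjective (Fin.cons 0 α : Fin (k + 2) → Fin (d + 1))) :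
    weight (w ∘ α) = d := by
  rw [weight_comp hw0, hw.numChanges_comp (monotone_cons_zero hα) hs]

lemma not_monotone_comp (hw0 : w 0 = 0) (hw : ¬ Monotone w) (hα : Monotone α)
    (hs : Function.Surjective (Fin.cons 0 α : Fin (k + 2) → Fin (d + 1))) :
    ¬ Monotone (w ∘ α) := fun h => hw <|
  monotone_of_monotone_comp (monotone_cons_zero hα) hs <| by
    rw [Fin.comp_cons, hw0]
    exact monotone_cons_zero h

lemma eq_and_eq_of_comp_eq {w' : Fin (d + 1) → Fin (n + 1)} {α' : Fin (k + 1) → Fin (d + 1)}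
    (hw0 : w 0 = 0) (hw : IsReduced w) (hα : Monotone α)
    (hs : Function.Surjective (Fin.cons 0 α : Fin (k + 2) → Fin (d + 1)))
    (hw0' : w' 0 = 0) (hw' : IsReduced w') (hα' : Monotone α')
    (hs' : Function.Surjective (Fin.cons 0 α' : Fin (k + 2) → Fin (d + 1)))
    (h : w ∘ α = w' ∘ α') : w = w' ∧ α = α' := by
  have hcons : w ∘ Fin.cons 0 α = w' ∘ Fin.cons 0 α' := by
    rw [Fin.comp_cons, Fin.comp_cons, hw0, hw0', h]
  obtain ⟨rfl, hαα⟩ :=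
    hw.comp_injective (monotone_cons_zero hα) hs hw' (monotone_cons_zero hα') hs' hcons
  exact ⟨rfl, by simpa using congrArg Fin.tail hαα⟩

lemma exists_comp_eq {x : Fin (k + 1) → Fin (n + 1)} (hx : weight x = d) :
    ∃ (w : Fin (d + 1) → Fin (n + 1)) (α : Fin (k + 1) → Fin (d + 1)),
      w 0 = 0 ∧ IsReduced w ∧ Monotone α ∧
        Function.Surjective (Fin.cons 0 α : Fin (k + 2) → Fin (d + 1)) ∧ w ∘ α = x := by
  obtain ⟨m, w, G, hw, hG, hGs, hx'⟩ := exists_isReduced_comp (Fin.cons 0 x : Fin (k + 2) → _)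
  obtain rfl : m = d := by rw [← hx, weight, ← hx', hw.numChanges_comp hG hGs]
  have hG0 := map_zero_of_monotone_of_surjective hG hGs
  refine ⟨w, Fin.tail G, ?_, hw, fun a b hab => hG (Fin.succ_le_succ_iff.mpr hab), ?_, ?_⟩
  · simpa [hG0] using congrFun hx' 0
  · rwa [← hG0, Fin.cons_self_tail]
  · funext i
    exact (congrFun hx' i.succ).trans (Fin.cons_succ _ _ _)

lemma monotone_of_weight_le_one {x : Fin (k + 1) → Fin (n + 1)} (h : weight x ≤ 1) :
    Monotone x := by
  obtain ⟨w, α, hw0, -, hα, -, hx⟩ := exists_comp_eq (x := x) rfl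
  rw [← hx]
  refine Monotone.comp (Fin.monotone_iff_le_succ.mpr fun j => ?_) hα
  rw [show j.castSucc = 0 from Fin.ext (by simp; omega), hw0]
  exact Fin.zero_le _

end Weight

lemma mem_horn_zero_iff {d : ℕ} {k : SimplexCategoryᵒᵖ} (α : Δ[d].obj k) :
    α ∈ (horn d 0).obj k ↔
      ¬ Function.Surjective (Fin.cons 0 (stdSimplex.asOrderHom α) : Fin (k.unop.len + 2) → _) := by
  rw [mem_horn_iff, ← Set.range_eq_univ, Fin.range_cons, Set.insert_eq, Set.union_comm]

lemma coe_asOrderHom_injective {d : ℕ} {k : SimplexCategoryᵒᵖ} :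
    Function.Injective fun α : Δ[d].obj k => ⇑(stdSimplex.asOrderHom α) := fun _ _ h =>
  stdSimplex.objEquiv.injective (SimplexCategory.Hom.ext _ _ (DFunLike.coe_injective h))

instance (n : ℕ) : Mono (iDeltaIncl n) :=
  (NatTrans.mono_iff_mono_app _).mpr fun _ => (mono_iff_injective _).mpr coe_asOrderHom_injective

def isColimitCofanSigmaApp {ι : Type} (A : ι → SSet.{0}) (k : SimplexCategoryᵒᵖ) :
    IsColimit (Cofan.mk ((∐ A).obj k) fun i => (Sigma.ι A i).app k) :=
  isColimitCofanMkObjOfIsColimit ((evaluation SimplexCategoryᵒᵖ (Type 0)).obj k) A _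
    (coproductIsCoproduct A)

lemma sigma_ι_app_jointly_surjective {ι : Type} (A : ι → SSet.{0}) (k : SimplexCategoryᵒᵖ)
    (x : (∐ A).obj k) : ∃ (i : ι) (y : (A i).obj k), (Sigma.ι A i).app k y = x :=
  Cofan.inj_jointly_surjective_of_isColimit (isColimitCofanSigmaApp A k) x

lemma sigma_ι_app_eq_iff {ι : Type} (Y : SSet.{0}) {k : SimplexCategoryᵒᵖ} {i j : ι}
    (y z : Y.obj k) :
    (Sigma.ι (fun _ : ι => Y) i).app k y = (Sigma.ι (fun _ : ι => Y) j).app k z ↔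
      i = j ∧ y = z := by
  refine (Cofan.inj_apply_eq_iff_of_isColimit (isColimitCofanSigmaApp (fun _ : ι => Y) k)
    (i := i) (j := j) y z).trans ⟨fun ⟨h, e⟩ => ⟨h, ?_⟩, fun ⟨h, e⟩ => ⟨h, ?_⟩⟩ <;>
    subst h <;> exact e.symm

lemma sigma_desc_app_ι_app {ι : Type} {A : ι → SSet.{0}} {Y : SSet.{0}} (f : ∀ i, A i ⟶ Y)
    (i : ι) {k : SimplexCategoryᵒᵖ} (y : (A i).obj k) :
    (Sigma.desc f).app k ((Sigma.ι A i).app k y) = (f i).app k y := by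
  rw [← NatTrans.comp_app_apply, Sigma.ι_desc]

section Filtration

variable {n d : ℕ}

def filtration (n m : ℕ) : (IDelta n).Subcomplex where
  obj _ := {x | Monotone x ∨ weight x ≤ m + 1}
  map φ _ hx := hx.imp (·.comp φ.unop.toOrderHom.monotone)
    fun h => (weight_comp_le _ φ.unop.toOrderHom.monotone).trans h

lemma filtration_monotone (n : ℕ) : Monotone (filtration n) :=
  fun _ _ h _ _ hx => hx.imp_right fun hx => hx.trans (by omega)

lemma iSup_filtration (n : ℕ) : ⨆ m, filtration n m = ⊤ := by
  ext k x
  simp only [Subfunctor.iSup_obj, Set.mem_iUnion, Subfunctor.top_obj, Set.top_eq_univ,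
    Set.mem_univ, iff_true]
  exact ⟨weight x, Or.inr (by omega)⟩

lemma filtration_zero (n : ℕ) : filtration n 0 = Subcomplex.range (iDeltaIncl n) := by
  ext k x
  refine ⟨fun hx => ⟨stdSimplex.objMk ⟨x, hx.elim id monotone_of_weight_le_one⟩, rfl⟩, ?_⟩
  rintro ⟨α, rfl⟩
  exact Or.inl (stdSimplex.asOrderHom α).monotone

def simplexHom (w : Fin (d + 1) → Fin (n + 1)) : Δ[d] ⟶ IDelta n where
  app _ := ↾fun α => w ∘ stdSimplex.asOrderHom α

def Cell (n d : ℕ) : Type :=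
  {w : Fin (d + 1) → Fin (n + 1) // w 0 = 0 ∧ IsReduced w ∧ ¬ Monotone w}

namespace Cell

lemma weight_eq (w : Cell n d) : weight w.1 = d :=
  weight_comp_of_surjective (α := id) w.2.1 w.2.2.1 monotone_id
    fun i => ⟨i.succ, Fin.cons_succ _ _ _⟩

variable {m : ℕ} {k : SimplexCategoryᵒᵖ}

def toFiltration (w : Cell n (m + 2)) : Δ[m + 2] ⟶ filtration n (m + 1) :=
  Subcomplex.lift (simplexHom w.1) <| by
    rintro k _ ⟨α, rfl⟩
    exact Or.inr ((weight_comp_le w.1 (stdSimplex.asOrderHom α).monotone).trans w.weight_eq.le)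

def hornToFiltration (w : Cell n (m + 2)) : (Λ[m + 2, 0] : SSet) ⟶ filtration n m :=
  Subcomplex.lift ((horn (m + 2) 0).ι ≫ simplexHom w.1) <| by
    rintro k _ ⟨⟨α, hα⟩, rfl⟩
    exact Or.inr (Nat.le_of_lt_succ (weight_comp_lt w.2.1 (stdSimplex.asOrderHom α).monotone
      ((mem_horn_zero_iff α).mp hα)))

lemma mem_horn_of_mem_filtration (w : Cell n (m + 2)) (α : Δ[m + 2].obj k)
    (h : w.1 ∘ stdSimplex.asOrderHom α ∈ (filtration n m).obj k) :
    α ∈ (horn (m + 2) 0).obj k := by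
  by_contra hα
  rw [mem_horn_zero_iff, not_not] at hα
  have hmono := (stdSimplex.asOrderHom α).monotone
  refine h.elim (not_monotone_comp w.2.1 w.2.2.2 hmono hα) fun h => ?_
  have := weight_comp_of_surjective w.2.1 w.2.2.1 hmono hα
  omega

lemma exists_of_mem_filtration_succ {x : (IDelta n).obj k}
    (hx : x ∈ (filtration n (m + 1)).obj k) (hx' : x ∉ (filtration n m).obj k) :
    ∃ (w : Cell n (m + 2)) (α : Δ[m + 2].obj k), w.1 ∘ stdSimplex.asOrderHom α = x := by
  have hxm : ¬ Monotone x := fun h => hx' (Or.inl h)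
  have hwx : weight x = m + 2 := by
    have := hx.resolve_left hxm
    have : ¬ weight x ≤ m + 1 := fun h => hx' (Or.inr h)
    omega
  obtain ⟨w, α, hw0, hw, hα, -, rfl⟩ := exists_comp_eq hwx
  exact ⟨⟨w, hw0, hw, fun h => hxm (h.comp hα)⟩, stdSimplex.objMk ⟨α, hα⟩, rfl⟩

lemma eq_of_comp_eq {w w' : Cell n (m + 2)} {α α' : Δ[m + 2].obj k}
    (hα : α ∉ (horn (m + 2) 0).obj k) (hα' : α' ∉ (horn (m + 2) 0).obj k)
    (h : w.1 ∘ stdSimplex.asOrderHom α = w'.1 ∘ stdSimplex.asOrderHom α') :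
    w = w' ∧ α = α' := by
  rw [mem_horn_zero_iff, not_not] at hα hα'
  obtain ⟨hw, hαα⟩ := eq_and_eq_of_comp_eq w.2.1 w.2.2.1 (stdSimplex.asOrderHom α).monotone hα
    w'.2.1 w'.2.2.1 (stdSimplex.asOrderHom α').monotone hα' h
  exact ⟨Subtype.ext hw, coe_asOrderHom_injective hαα⟩

end Cell

variable (n) (m : ℕ) {k : SimplexCategoryᵒᵖ}

abbrev sigmaHornInclusion :
    (∐ fun _ : Cell n (m + 2) => (Λ[m + 2, 0] : SSet)) ⟶ ∐ fun _ : Cell n (m + 2) => Δ[m + 2] :=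
  Sigma.desc fun w => (horn (m + 2) 0).ι ≫ Sigma.ι (fun _ => Δ[m + 2]) w

lemma hornToFiltration_comp_homOfLE :
    Sigma.desc Cell.hornToFiltration ≫ Subcomplex.homOfLE (filtration_monotone n m.le_succ) =
      sigmaHornInclusion n m ≫ Sigma.desc Cell.toFiltration := by
  ext w : 1
  rw [← cancel_mono (filtration n (m + 1)).ι]
  simp only [Category.assoc, Sigma.ι_desc_assoc]
  rfl

variable {n m}

lemma notMem_horn_of_notMem_range {w : Cell n (m + 2)} {α : Δ[m + 2].obj k}
    (h : (Sigma.ι (fun _ : Cell n (m + 2) => Δ[m + 2]) w).app k α ∉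
      Set.range ((sigmaHornInclusion n m).app k)) :
    α ∉ (horn (m + 2) 0).obj k := fun hα =>
  h ⟨(Sigma.ι (fun _ : Cell n (m + 2) => (Λ[m + 2, 0] : SSet)) w).app k ⟨α, hα⟩,
    (sigma_desc_app_ι_app _ _ _).trans rfl⟩

variable (n m k)

lemma isPullback_app :
    IsPullback ((Sigma.desc Cell.hornToFiltration).app k) ((sigmaHornInclusion n m).app k)
      ((Subcomplex.homOfLE (filtration_monotone n m.le_succ)).app k)
      ((Sigma.desc Cell.toFiltration).app k) := by
  rw [Types.isPullback_iff]
  refine ⟨congr_app (hornToFiltration_comp_homOfLE n m) k, ?_, fun x y hxy => ?_⟩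
  · rintro x y ⟨-, hxy⟩
    obtain ⟨w, α, rfl⟩ := sigma_ι_app_jointly_surjective _ k x
    obtain ⟨w', α', rfl⟩ := sigma_ι_app_jointly_surjective _ k y
    simp only [sigma_desc_app_ι_app, NatTrans.comp_app_apply] at hxy
    obtain ⟨rfl, h⟩ := (sigma_ι_app_eq_iff _ _ _).mp hxy
    rw [show α = α' from Subtype.ext h]
  · obtain ⟨w, α, rfl⟩ := sigma_ι_app_jointly_surjective _ k y
    rw [sigma_desc_app_ι_app] at hxy
    have hx : x.val = w.1 ∘ stdSimplex.asOrderHom α := Subtype.ext_iff.mp hxy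
    have hα := w.mem_horn_of_mem_filtration α (hx ▸ x.2)
    exact ⟨(Sigma.ι (fun _ : Cell n (m + 2) => (Λ[m + 2, 0] : SSet)) w).app k ⟨α, hα⟩,
      (sigma_desc_app_ι_app _ _ _).trans (Subtype.ext hx.symm),
      (sigma_desc_app_ι_app _ _ _).trans rfl⟩

lemma isPushout_filtration :
    IsPushout (sigmaHornInclusion n m) (Sigma.desc Cell.hornToFiltration)
      (Sigma.desc Cell.toFiltration) (Subcomplex.homOfLE (filtration_monotone n m.le_succ)) := by
  refine IsPushout.flip (IsPushout.of_forall_isPushout_app fun k => ?_)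
  have : Mono ((Subcomplex.homOfLE (filtration_monotone n m.le_succ)).app k) :=
    (NatTrans.mono_iff_mono_app _).mp inferInstance k
  refine Types.isPushout_of_isPullback_of_mono' (isPullback_app n m k) ?_ ?_
  · ext x
    simp only [Set.sup_eq_union, Set.mem_union, Set.mem_range, Set.mem_univ, iff_true]
    by_cases hx : x.val ∈ (filtration n m).obj k
    · exact Or.inl ⟨⟨x.val, hx⟩, rfl⟩
    · obtain ⟨w, α, hwα⟩ := Cell.exists_of_mem_filtration_succ x.2 hx
      exact Or.inr ⟨(Sigma.ι (fun _ : Cell n (m + 2) => Δ[m + 2]) w).app k α,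
        (sigma_desc_app_ι_app _ _ _).trans (Subtype.ext hwα)⟩
  · intro x y hx hy hxy
    obtain ⟨w, α, rfl⟩ := sigma_ι_app_jointly_surjective _ k x
    obtain ⟨w', α', rfl⟩ := sigma_ι_app_jointly_surjective _ k y
    rw [sigma_desc_app_ι_app, sigma_desc_app_ι_app] at hxy
    obtain ⟨rfl, rfl⟩ := Cell.eq_of_comp_eq (notMem_horn_of_notMem_range hx)
      (notMem_horn_of_notMem_range hy) (Subtype.ext_iff.mp hxy)
    rfl

end Filtration

lemma isCellularIn_iDeltaIncl (n : ℕ) : IsCellularIn LeftHornClass (iDeltaIncl n) :=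
  ⟨(filtration_monotone n).functor ⋙ Subcomplex.toSSetFunctor, _,
    isColimitOfPreserves Subcomplex.toSSetFunctor
      (Preorder.colimitCoconeOfIsLUB (filtration_monotone n).functor (pt := ⊤)
        (by rw [← iSup_filtration n]; exact isLUB_iSup)).isColimit,
    Subcomplex.eqToIso (filtration_zero n) ≪≫ (asIso (Subcomplex.toRange (iDeltaIncl n))).symm,
    Subcomplex.topIso _,
    fun m => ⟨Cell n (m + 2), _, _, fun _ => (horn (m + 2) 0).ι,
      fun _ => ⟨m + 2, by omega, ⟨Iso.refl _⟩⟩, _, _, isPushout_filtration n m⟩,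
    rfl⟩

lemma IsCellularIn.saturationOf {S : MorphismProperty SSet.{0}} {A B : SSet.{0}} {f : A ⟶ B}
    (hf : IsCellularIn S f) : saturationOf S f := by
  show S.rlp.llp f
  obtain ⟨F, c, hc, e₀, e, hF, rfl⟩ := hf
  have hstep (m : ℕ) : S.rlp.llp (F.map (homOfLE (Nat.le_succ m))) := by
    obtain ⟨ι, A, B, g, hg, u, v, hpo⟩ := hF m
    have hsigma : (Sigma.desc fun i => g i ≫ Sigma.ι B i) = Limits.Sigma.map g := by
      ext i
      simp
    refine MorphismProperty.IsStableUnderCobaseChange.of_isPushout hpo.flip ?_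
    rw [hsigma]
    exact MorphismProperty.colimMap _ fun i => S.le_llp_rlp _ (hg i.as)
  have hbot : S.rlp.llp (c.ι.app 0) := fun _ _ p hp =>
    HasLiftingProperty.transfiniteComposition.hasLiftingProperty_ι_app_bot hc
      fun j _ => hstep j p hp
  exact S.rlp.llp.comp_mem _ _ (MorphismProperty.llp_of_isIso _ _)
    (S.rlp.llp.comp_mem _ _ hbot (MorphismProperty.llp_of_isIso _ _))

theorem iDeltaIncl_cellular_general (n : ℕ) :
    IsCellularIn LeftHornClass (iDeltaIncl n) ∧ saturationOf LeftHornClass (iDeltaIncl n) :=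
  ⟨isCellularIn_iDeltaIncl n, (isCellularIn_iDeltaIncl n).saturationOf⟩

/-- For every `n ≥ 1`, the canonical inclusion `Δ[n] → IΔ^n` is cellular with
respect to the set of left horn inclusions `Λ[m,0] → Δ[m]`, `m ≥ 2`; in particular it lies in
the weakly saturated class generated by the left horn inclusions. -/
theorem iDeltaIncl_cellular (n : ℕ) (hn : 1 ≤ n) :
    IsCellularIn LeftHornClass (iDeltaIncl n) ∧ saturationOf LeftHornClass (iDeltaIncl n) :=
  iDeltaIncl_cellular_general n

end BousfieldPaper
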